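/- With v(A,B) ∈ ℝ^{(Fin 3 × Fin 3) × V_A × V_B} the deterministic probability vector of a pair (A,B) of deterministic Alice and Bob strategies for the Magic Square game, the affine span of the set of all vectors v(A,B) (over all 4³ × 4³ deterministic pairs) has dimension 99. That is, the local polytope Ω_{34} with 3 inputs and 4 outputs per side is full-dimensional in the 99-dimensional no-signalling probability space. -/

import Mathlib

/-- Alice's admissible outputs for the Magic Square game: triples of bits with
even parity. -/
def MagicVA : Type := {a : Fin 3 → ZMod 2 // a 0 + a 1 + a 2 = 0}

/-- Bob's admissible outputs for the Magic Square game: triples of bits with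
odd parity. -/
def MagicVB : Type := {b : Fin 3 → ZMod 2 // b 0 + b 1 + b 2 = 1}

instance : Fintype MagicVA := by unfold MagicVA; infer_instance
instance : Fintype MagicVB := by unfold MagicVB; infer_instance
instance : DecidableEq MagicVA := by unfold MagicVA; infer_instance
instance : DecidableEq MagicVB := by unfold MagicVB; infer_instance

/-- The deterministic probability vector associated to a pair of deterministic
strategies `A : Fin 3 → MagicVA`, `B : Fin 3 → MagicVB`: its entry at
`((x, y), a, b)` is `1` if `A x = a` and `B y = b`, and `0` otherwise. -/
def detVector (A : Fin 3 → MagicVA) (B : Fin 3 → MagicVB) :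
    ((Fin 3 × Fin 3) × MagicVA × MagicVB) → ℝ :=
  fun q => if A q.1.1 = q.2.1 ∧ B q.1.2 = q.2.2 then 1 else 0

/-!
Write a deterministic vector as the outer product of the local vectors `[A x = a]` and
`[B y = b]` of the two parties. For one party, every local vector is a combination of those of
the ten strategies deviating from a constant strategy in at most one input, and these ten are
linearly independent: their matrix of values at ten suitable points is unitriangular. The
evaluation matrix of the hundred products is then a Kronecker product of unitriangular
matrices, so the deterministic vectors span a space of dimension `10 * 10 = 100`. They all lie
on the hyperplane where the output probabilities for the inputs `(0, 0)` sum to `1`, which misses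
the origin, so their affine span has dimension `99`.
-/

open Module Submodule Matrix
open scoped Kronecker

section AffineDimension

variable {k V : Type*} [Field k] [AddCommGroup V] [Module k V]

theorem span_eq_vectorSpan_sup_span_singleton {s : Set V} {p : V} (hp : p ∈ s) :
    span k s = vectorSpan k s ⊔ k ∙ p := by
  apply le_antisymm
  · rw [span_le]
    intro v hv
    rw [← sub_add_cancel v p]
    exact add_mem (mem_sup_left (vsub_mem_vectorSpan k hv hp))
      (mem_sup_right (mem_span_singleton_self p))
  · refine sup_le (span_le.2 ?_) ((span_singleton_le_iff_mem _ _).2 (subset_span hp))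
    rintro _ ⟨a, ha, b, hb, rfl⟩
    exact sub_mem (subset_span ha) (subset_span hb)

theorem finrank_vectorSpan_add_one [FiniteDimensional k V] (f : V →ₗ[k] k) {s : Set V}
    (hs : ∀ v ∈ s, f v = 1) {p : V} (hp : p ∈ s) :
    finrank k (vectorSpan k s) + 1 = finrank k (span k s) := by
  have hker : vectorSpan k s ≤ LinearMap.ker f := by
    rw [vectorSpan_def, span_le]
    rintro _ ⟨a, ha, b, hb, rfl⟩
    simp [hs a ha, hs b hb]
  have hp0 : p ≠ 0 := by
    rintro rfl
    simpa using hs 0 hp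
  have hdisj : vectorSpan k s ⊓ k ∙ p = ⊥ := by
    refine eq_bot_iff.2 fun v hv => ?_
    obtain ⟨hv, hvp⟩ := mem_inf.1 hv
    obtain ⟨c, rfl⟩ := mem_span_singleton.1 hvp
    have hc : c = 0 := by simpa [hs p hp] using hker hv
    simp [hc]
  have h := finrank_sup_add_finrank_inf_eq (vectorSpan k s) (k ∙ p)
  rwa [← span_eq_vectorSpan_sup_span_singleton hp, hdisj, finrank_bot,
    finrank_span_singleton hp0, add_zero, eq_comm] at h

end AffineDimension

theorem linearIndependent_of_det_eval_ne_zero {ι P K : Type*} [Fintype ι] [DecidableEq ι]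
    [CommRing K] [IsDomain K] (w : ι → P → K) (q : ι → P)
    (h : (of fun k i => w i (q k)).det ≠ 0) : LinearIndependent K w :=
  LinearIndependent.of_comp (LinearMap.funLeft K K q) (linearIndependent_cols_of_det_ne_zero h)

section LocalVectors

variable {X Y α β : Type*}

def outerProd : (X × α → ℝ) →ₗ[ℝ] (Y × β → ℝ) →ₗ[ℝ] ((X × Y) × α × β → ℝ) :=
  LinearMap.mk₂ ℝ (fun f g q => f (q.1.1, q.2.1) * g (q.1.2, q.2.2))
    (fun _ _ _ => by ext; simp [add_mul]) (fun _ _ _ => by ext; simp [mul_assoc])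
    (fun _ _ _ => by ext; simp [mul_add]) (fun _ _ _ => by ext; simp [mul_left_comm])

theorem outerProd_apply (f : X × α → ℝ) (g : Y × β → ℝ) (q : (X × Y) × α × β) :
    outerProd f g q = f (q.1.1, q.2.1) * g (q.1.2, q.2.2) := rfl

theorem linearIndependent_outerProd {ι κ : Type*} [Fintype ι] [DecidableEq ι] [Fintype κ]
    [DecidableEq κ] (u : ι → X × α → ℝ) (w : κ → Y × β → ℝ) (p : ι → X × α) (q : κ → Y × β)
    (hu : (of fun k i => u i (p k)).det ≠ 0) (hw : (of fun l j => w j (q l)).det ≠ 0) :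
    LinearIndependent ℝ fun ij : ι × κ => outerProd (u ij.1) (w ij.2) := by
  refine linearIndependent_of_det_eval_ne_zero _
    (fun kl => (((p kl.1).1, (q kl.2).1), (p kl.1).2, (q kl.2).2)) ?_
  have hkron : (of fun (kl : ι × κ) (ij : ι × κ) => outerProd (u ij.1) (w ij.2)
      (((p kl.1).1, (q kl.2).1), (p kl.1).2, (q kl.2).2)) =
      (of fun k i => u i (p k)) ⊗ₖ (of fun l j => w j (q l)) := rfl
  rw [hkron, det_kronecker]
  exact mul_ne_zero (pow_ne_zero _ hu) (pow_ne_zero _ hw)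

variable [DecidableEq α]

def localVec (A : X → α) : X × α → ℝ := fun p => if A p.1 = p.2 then 1 else 0

theorem sum_localVec_fiber [Fintype α] (A : X → α) (x : X) : ∑ a, localVec A (x, a) = 1 := by
  simp [localVec]

theorem sum_localVec_update [Fintype X] [DecidableEq X] (c A : X → α) :
    ∑ x, localVec (Function.update c x (A x)) =
      localVec A + ((Fintype.card X : ℝ) - 1) • localVec c := by
  ext ⟨y, a⟩
  simp only [Finset.sum_apply, Pi.add_apply, Pi.smul_apply, smul_eq_mul, localVec]
  rw [← Finset.add_sum_erase _ _ (Finset.mem_univ y), Function.update_self,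
    Finset.sum_congr rfl fun x hx => by rw [Function.update_of_ne (Finset.ne_of_mem_erase hx).symm]]
  have : Nonempty X := ⟨y⟩
  simp [Finset.card_erase_of_mem, Nat.cast_sub Fintype.card_pos]

theorem localVec_mem_span [Fintype X] [DecidableEq X] [Nonempty X] {ι : Type*} (c A : X → α)
    (L : ι → X → α) (hL : ∀ x a, ∃ i, L i = Function.update c x a) :
    localVec A ∈ span ℝ (Set.range (localVec ∘ L)) := by
  have hmem : ∀ x a, localVec (Function.update c x a) ∈ span ℝ (Set.range (localVec ∘ L)) :=
    fun x a => subset_span <| (hL x a).imp fun i hi => by rw [Function.comp_apply, hi]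
  have hc : localVec c ∈ span ℝ (Set.range (localVec ∘ L)) := by
    obtain ⟨x⟩ := ‹Nonempty X›
    simpa using hmem x (c x)
  rw [eq_sub_of_add_eq (sum_localVec_update c A).symm]
  exact sub_mem (sum_mem fun x _ => hmem x (A x)) (smul_mem _ _ hc)

theorem sum_outerProd_localVec [Fintype α] [Fintype β] [DecidableEq β] (A : X → α) (B : Y → β)
    (x : X) (y : Y) : ∑ r : α × β, outerProd (localVec A) (localVec B) ((x, y), r) = 1 := by
  simp only [Fintype.sum_prod_type, outerProd_apply, ← Finset.mul_sum,
    sum_localVec_fiber, mul_one]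

theorem det_localVec_eq_one {ι : Type*} [Fintype ι] [DecidableEq ι] [LinearOrder ι]
    (L : ι → X → α) (p : ι → X × α) (hdiag : ∀ i, L i (p i).1 = (p i).2)
    (htri : ∀ i k, i < k → L i (p k).1 ≠ (p k).2) :
    (of fun k i => localVec (L i) (p k)).det = 1 := by
  rw [det_of_isUpperTriangular]
  · simp [localVec, hdiag]
  · intro k i hik
    simp [localVec, htri i k hik]

end LocalVectors

theorem detVector_eq_outerProd (A : Fin 3 → MagicVA) (B : Fin 3 → MagicVB) :
    detVector A B = outerProd (localVec A) (localVec B) := by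
  ext q
  simp only [detVector, outerProd_apply, localVec, ite_zero_mul_ite_zero, mul_one]

namespace MagicSquare

def aliceOutput (k : Fin 4) : MagicVA :=
  ⟨![![0, 0, 0], ![0, 1, 1], ![1, 0, 1], ![1, 1, 0]] k, by fin_cases k <;> decide⟩

def bobOutput (k : Fin 4) : MagicVB :=
  ⟨![![1, 1, 1], ![1, 0, 0], ![0, 1, 0], ![0, 0, 1]] k, by fin_cases k <;> decide⟩

section Deviations

variable {α : Type*}

/-- `e` enumerates the outputs, `e 0` being the default; pinning a strategy at `(0, e 0)` leaves
it constant, so the ten points give all `3 * (4 - 1) + 1` deviations of `fun _ => e 0`. -/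
def deviationPoint (e : Fin 4 → α) : Fin 10 → Fin 3 × α :=
  ![(0, e 0), (0, e 1), (0, e 2), (0, e 3), (1, e 1), (1, e 2), (1, e 3),
    (2, e 1), (2, e 2), (2, e 3)]

def deviation (e : Fin 4 → α) (i : Fin 10) : Fin 3 → α :=
  Function.update (fun _ => e 0) (deviationPoint e i).1 (deviationPoint e i).2

theorem det_localVec_deviation [DecidableEq α] (e : Fin 4 → α)
    (htri : ∀ i k, i < k → deviation e i (deviationPoint e k).1 ≠ (deviationPoint e k).2) :
    (of fun k i => localVec (deviation e i) (deviationPoint e k)).det = 1 :=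
  det_localVec_eq_one _ _ (fun _ => Function.update_self ..) htri

end Deviations

theorem deviation_aliceOutput_triangular : ∀ i k : Fin 10, i < k →
    deviation aliceOutput i (deviationPoint aliceOutput k).1 ≠
      (deviationPoint aliceOutput k).2 := by
  decide

theorem deviation_bobOutput_triangular : ∀ i k : Fin 10, i < k →
    deviation bobOutput i (deviationPoint bobOutput k).1 ≠
      (deviationPoint bobOutput k).2 := by
  decide

theorem exists_deviation_aliceOutput_eq_update : ∀ (x : Fin 3) (a : MagicVA),
    ∃ i, deviation aliceOutput i = Function.update (fun _ => aliceOutput 0) x a := by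
  decide

theorem exists_deviation_bobOutput_eq_update : ∀ (y : Fin 3) (b : MagicVB),
    ∃ j, deviation bobOutput j = Function.update (fun _ => bobOutput 0) y b := by
  decide

def detVectors : Set ((Fin 3 × Fin 3) × MagicVA × MagicVB → ℝ) :=
  {v | ∃ (A : Fin 3 → MagicVA) (B : Fin 3 → MagicVB), v = detVector A B}

def marginal (x y : Fin 3) : ((Fin 3 × Fin 3) × MagicVA × MagicVB → ℝ) →ₗ[ℝ] ℝ :=
  ∑ r, LinearMap.proj ((x, y), r)

theorem marginal_detVector (x y : Fin 3) (A : Fin 3 → MagicVA) (B : Fin 3 → MagicVB) :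
    marginal x y (detVector A B) = 1 := by
  simpa [marginal, detVector_eq_outerProd] using sum_outerProd_localVec A B x y

def detFamily (ij : Fin 10 × Fin 10) : (Fin 3 × Fin 3) × MagicVA × MagicVB → ℝ :=
  detVector (deviation aliceOutput ij.1) (deviation bobOutput ij.2)

theorem linearIndependent_detFamily : LinearIndependent ℝ detFamily := by
  have h := linearIndependent_outerProd (fun i => localVec (deviation aliceOutput i))
    (fun j => localVec (deviation bobOutput j)) (deviationPoint aliceOutput)
    (deviationPoint bobOutput)
    (by rw [det_localVec_deviation _ deviation_aliceOutput_triangular]; exact one_ne_zero)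
    (by rw [det_localVec_deviation _ deviation_bobOutput_triangular]; exact one_ne_zero)
  rwa [show detFamily = _ from funext fun _ => detVector_eq_outerProd _ _]

theorem span_detVectors : span ℝ detVectors = span ℝ (Set.range detFamily) := by
  refine le_antisymm (span_le.2 ?_) (span_mono (Set.range_subset_iff.2 fun _ => ⟨_, _, rfl⟩))
  rintro _ ⟨A, B, rfl⟩
  have h := apply_mem_map₂ outerProd
    (localVec_mem_span (fun _ => aliceOutput 0) A _ exists_deviation_aliceOutput_eq_update)
    (localVec_mem_span (fun _ => bobOutput 0) B _ exists_deviation_bobOutput_eq_update)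
  rw [map₂_span_span, ← detVector_eq_outerProd] at h
  refine span_mono ?_ h
  rintro _ ⟨_, ⟨i, rfl⟩, _, ⟨j, rfl⟩, rfl⟩
  exact ⟨(i, j), detVector_eq_outerProd _ _⟩

theorem finrank_vectorSpan_detVectors : finrank ℝ (vectorSpan ℝ detVectors) = 99 := by
  have h := finrank_vectorSpan_add_one (marginal 0 0) (s := detVectors)
    (by rintro _ ⟨A, B, rfl⟩; exact marginal_detVector 0 0 A B)
    (p := detVector (fun _ => aliceOutput 0) (fun _ => bobOutput 0)) ⟨_, _, rfl⟩
  rw [span_detVectors, finrank_span_eq_card linearIndependent_detFamily] at h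
  simpa using h

end MagicSquare

/-- **The local polytope `Ω₃₄` is full-dimensional in the no-signalling space.**
The affine span of all `4³ × 4³` deterministic probability vectors for the
scenario with 3 inputs and 4 outputs per party has dimension
`m²(n−1)² + 2m(n−1) = 99` (with `m = 3`, `n = 4`). -/
theorem local_polytope_full_dimensional :
    Module.finrank ℝ
      (affineSpan ℝ
        {v : ((Fin 3 × Fin 3) × MagicVA × MagicVB) → ℝ |
          ∃ (A : Fin 3 → MagicVA) (B : Fin 3 → MagicVB), v = detVector A B}).direction
      = 99 := by
  rw [direction_affineSpan]
  exact MagicSquare.finrank_vectorSpan_detVectors
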